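/- For every natural number a and every real number θ, the accuracy function of the frequent outcome approach has the expanded polynomial form π_{2a+1}(θ) = 1 − θ − Σ_{t=1}^{a+2} α_{a,t}·θ^{a+t}, where α_{a,t} := Σ_{i=1}^{a} W_{i, a+t−i} + 2·(a+1)·W_{a+1, t−1} − [a = 0 and t = 1], with W_{i,j} := (−1)^j · binom(i,j) · C_{i−1} for 0 ≤ j ≤ i and W_{i,j} := 0 otherwise, and where [·] denotes the indicator (equal to 1 when the condition holds and 0 otherwise). -/

import Mathlib

open Finset

/-- Prediction weight of the frequent outcome approach. -/
noncomputable def w (k n : ℕ) (θ : ℝ) : ℝ :=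
  if 2 * n < k then 1 - θ else if 2 * n = k then 1 / 2 else θ

/-- Accuracy function of the frequent outcome approach. -/
noncomputable def acc (k : ℕ) (θ : ℝ) : ℝ :=
  ∑ n ∈ Finset.range (k + 1), w k n θ * (k.choose n) * θ ^ n * (1 - θ) ^ (k - n)

/-- The coefficients `W_{i,j}`. -/
noncomputable def W (i j : ℕ) : ℝ :=
  if 1 ≤ i ∧ j ≤ i then (-1 : ℝ) ^ j * (i.choose j : ℝ) * (catalan (i - 1) : ℝ) else 0

/-- The coefficients `α_{a,t}` of the expanded polynomial form. -/
noncomputable def α (a t : ℕ) : ℝ :=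
  (∑ i ∈ Finset.Icc 1 a, W i (a + t - i)) + 2 * ((a : ℝ) + 1) * W (a + 1) (t - 1)
    - (if a = 0 ∧ t = 1 then 1 else 0)

/-!
Write `u = θ(1-θ)` and let `P_a(θ) = ∑_{n ≤ a} b_{2a+1,n}(θ)`, a sum over the lower half of the
Bernstein basis of degree `2a+1`, be the probability that `Bin(2a+1, θ) ≤ a`. The weights are
`1-θ` below the median and `θ` above it, so `π_{2a+1} = θ + (1-2θ) P_a`. Pascal's rule for
Bernstein polynomials gives `P_{a+1} = P_a + (1-2θ) binom(2a+1,a) u^{a+1}`; with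
`binom(2a+1,a) = (2a+1) C_a` and `(a+2) C_{a+1} = 2(2a+1) C_a`, induction on `a` turns this into
the polynomial identity
`1 - θ - π_{2a+1} = ∑_{i=1}^{a} C_{i-1} u^i + 2(a+1) C_a u^{a+1} - θ`.
The coefficient of `θ^e` in `C_{i-1} u^i` is `W_{i,e-i}` for `e ≥ i`, which gives `α_{a,e-a}` for
`e ≥ a+1`. The coefficients of lower degree vanish because `1 - P_a` is a sum of Bernstein
polynomials `b_{2a+1,n}` with `n ≥ a+1`, each divisible by `θ^{a+1}`.
-/

open Polynomial

section Bernstein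

variable (R : Type*) [CommRing R]

theorem bernsteinPolynomial_succ_zero (n : ℕ) :
    bernsteinPolynomial R (n + 1) 0 = (1 - X) * bernsteinPolynomial R n 0 := by
  simp [bernsteinPolynomial, pow_succ, mul_comm]

theorem bernsteinPolynomial_succ_succ (n ν : ℕ) :
    bernsteinPolynomial R (n + 1) (ν + 1) =
      X * bernsteinPolynomial R n ν + (1 - X) * bernsteinPolynomial R n (ν + 1) := by
  simp only [bernsteinPolynomial, Nat.choose_succ_succ, Nat.cast_add, Nat.succ_sub_succ]
  rcases lt_or_ge ν n with h | h
  · rw [show n - ν = n - (ν + 1) + 1 by omega]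
    ring
  · rw [Nat.choose_eq_zero_of_lt (by omega : n < ν + 1)]
    ring

noncomputable def bernsteinPartialSum (n m : ℕ) : R[X] :=
  ∑ ν ∈ range m, bernsteinPolynomial R n ν

theorem bernsteinPartialSum_succ_succ (n m : ℕ) :
    bernsteinPartialSum R (n + 1) (m + 1) =
      X * bernsteinPartialSum R n m + (1 - X) * bernsteinPartialSum R n (m + 1) := by
  simp only [bernsteinPartialSum, sum_range_succ', bernsteinPolynomial_succ_succ,
    bernsteinPolynomial_succ_zero, sum_add_distrib, mul_add, mul_sum]
  ring

theorem X_pow_dvd_one_sub_bernsteinPartialSum {n m : ℕ} (h : m ≤ n + 1) :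
    X ^ m ∣ 1 - bernsteinPartialSum R n m := by
  obtain ⟨k, hk⟩ := Nat.exists_eq_add_of_le h
  rw [← bernsteinPolynomial.sum R n, hk, sum_range_add, bernsteinPartialSum, add_sub_cancel_left]
  refine dvd_sum fun j _ => ?_
  exact dvd_mul_of_dvd_left (dvd_mul_of_dvd_right (pow_dvd_pow X (m.le_add_right j)) _) _

theorem bernsteinPartialSum_two_mul_add_three (a : ℕ) :
    bernsteinPartialSum R (2 * a + 3) (a + 2) = bernsteinPartialSum R (2 * a + 1) (a + 1)
      + (1 - 2 * X) * ((2 * a + 1).choose a : R[X]) * (X * (1 - X)) ^ (a + 1) := by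
  have h₁ := bernsteinPartialSum_succ_succ R (2 * a + 2) (a + 1)
  have h₂ := bernsteinPartialSum_succ_succ R (2 * a + 1) a
  have h₃ := bernsteinPartialSum_succ_succ R (2 * a + 1) (a + 1)
  have h₄ : bernsteinPartialSum R (2 * a + 1) (a + 1) = bernsteinPartialSum R (2 * a + 1) a
      + ((2 * a + 1).choose a : R[X]) * X ^ a * (1 - X) ^ (a + 1) := by
    rw [bernsteinPartialSum, sum_range_succ, bernsteinPolynomial,
      show 2 * a + 1 - a = a + 1 by omega]
    rfl
  have h₅ : bernsteinPartialSum R (2 * a + 1) (a + 2) = bernsteinPartialSum R (2 * a + 1) (a + 1)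
      + ((2 * a + 1).choose a : R[X]) * X ^ (a + 1) * (1 - X) ^ a := by
    rw [bernsteinPartialSum, sum_range_succ, bernsteinPolynomial, Nat.choose_symm_half,
      show 2 * a + 1 - (a + 1) = a by omega]
    rfl
  rw [show 2 * a + 3 = 2 * a + 2 + 1 by omega, h₁, show 2 * a + 2 = 2 * a + 1 + 1 by omega, h₂, h₃,
    h₅, h₄, mul_pow]
  ring

end Bernstein

theorem succ_succ_mul_catalan_succ (n : ℕ) :
    (n + 2) * catalan (n + 1) = 2 * (2 * n + 1) * catalan n := by
  refine Nat.eq_of_mul_eq_mul_left n.succ_pos ?_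
  calc (n + 1) * ((n + 2) * catalan (n + 1))
      = (n + 1) * (n + 1).centralBinom := by rw [← succ_mul_catalan_eq_centralBinom]
    _ = 2 * (2 * n + 1) * n.centralBinom := Nat.succ_mul_centralBinom_succ n
    _ = (n + 1) * (2 * (2 * n + 1) * catalan n) := by
      rw [← succ_mul_catalan_eq_centralBinom]; ring

theorem choose_two_mul_add_one_eq (n : ℕ) : (2 * n + 1).choose n = (2 * n + 1) * catalan n := by
  refine Nat.eq_of_mul_eq_mul_right n.succ_pos ?_
  calc (2 * n + 1).choose n * (n + 1)
      = (2 * n + 1) * (2 * n).choose n := by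
        rw [← Nat.choose_symm_half, Nat.add_one_mul_choose_eq]
    _ = (2 * n + 1) * catalan n * (n + 1) := by
      rw [← Nat.centralBinom_eq_two_mul_choose, ← succ_mul_catalan_eq_centralBinom]; ring

noncomputable def catalanTerm (i : ℕ) : ℝ[X] :=
  C (catalan (i - 1) : ℝ) * (X * (1 - X)) ^ i

noncomputable def catalanForm (a : ℕ) : ℝ[X] :=
  ∑ i ∈ Icc 1 a, catalanTerm i + C (2 * ((a : ℝ) + 1)) * catalanTerm (a + 1) - X

theorem catalanForm_eq (a : ℕ) :
    catalanForm a = (1 - 2 * X) * (1 - bernsteinPartialSum ℝ (2 * a + 1) (a + 1)) := by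
  induction a with
  | zero =>
    rw [catalanForm, Icc_eq_empty_of_lt zero_lt_one, sum_empty, catalanTerm, bernsteinPartialSum,
      sum_range_one, bernsteinPolynomial, catalan_zero, Nat.choose_zero_right]
    simp only [Nat.cast_zero, Nat.cast_one, zero_add, mul_one, map_one, map_ofNat C 2]
    ring
  | succ a ih =>
    have hcat : ((a : ℝ[X]) + 2) * (catalan (a + 1) : ℝ[X]) = 2 * (2 * a + 1) * catalan a := by
      exact_mod_cast succ_succ_mul_catalan_succ a
    have hchoose : ((2 * a + 1).choose a : ℝ[X]) = (2 * a + 1) * catalan a := by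
      exact_mod_cast choose_two_mul_add_one_eq a
    rw [catalanForm, sum_Icc_succ_top (by omega), show 2 * (a + 1) + 1 = 2 * a + 3 by ring,
      bernsteinPartialSum_two_mul_add_three]
    rw [catalanForm] at ih
    simp only [catalanTerm, map_mul, map_add, map_natCast, map_ofNat, map_one,
      Nat.cast_add, Nat.cast_one, add_tsub_cancel_right] at ih ⊢
    linear_combination ih + 2 * (X * (1 - X)) ^ (a + 2) * hcat
      + (1 - 2 * X) ^ 2 * (X * (1 - X)) ^ (a + 1) * hchoose

theorem acc_two_mul_add_one (a : ℕ) (θ : ℝ) :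
    acc (2 * a + 1) θ = θ + (1 - 2 * θ) * (bernsteinPartialSum ℝ (2 * a + 1) (a + 1)).eval θ := by
  let e n := (bernsteinPolynomial ℝ (2 * a + 1) n).eval θ
  have hw n : w (2 * a + 1) n θ = θ + (1 - 2 * θ) * if n < a + 1 then 1 else 0 := by
    unfold w
    split_ifs <;> first | omega | ring
  have htotal : ∑ n ∈ range (2 * a + 1 + 1), e n = 1 := by
    rw [← eval_finsetSum, bernsteinPolynomial.sum, eval_one]
  have hlow : (range (2 * a + 1 + 1)).filter (· < a + 1) = range (a + 1) := by
    ext n; simp only [mem_filter, mem_range]; omega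
  calc acc (2 * a + 1) θ = ∑ n ∈ range (2 * a + 1 + 1), w (2 * a + 1) n θ * e n := by
        simp only [acc, e, bernsteinPolynomial, eval_mul, eval_natCast, eval_pow, eval_X, eval_sub,
          eval_one, mul_assoc]
    _ = θ * ∑ n ∈ range (2 * a + 1 + 1), e n
        + (1 - 2 * θ) * ∑ n ∈ (range (2 * a + 1 + 1)).filter (· < a + 1), e n := by
        simp only [hw, sum_filter, mul_sum, ← sum_add_distrib]
        refine sum_congr rfl fun n _ => ?_
        split_ifs <;> ring
    _ = θ + (1 - 2 * θ) * (bernsteinPartialSum ℝ (2 * a + 1) (a + 1)).eval θ := by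
        rw [htotal, hlow, bernsteinPartialSum, eval_finsetSum, mul_one]

theorem coeff_one_sub_X_pow (R : Type*) [CommRing R] (i j : ℕ) :
    ((1 - X : R[X]) ^ i).coeff j = (-1) ^ j * i.choose j := by
  have h : (1 - X : R[X]) ^ i = ((1 + X) ^ i).comp (C (-1) * X) := by
    simp [sub_eq_add_neg]
  rw [h, comp_C_mul_X_coeff, coeff_one_add_X_pow, mul_comm]

theorem W_of_one_le {i : ℕ} (hi : 1 ≤ i) (j : ℕ) :
    W i j = (-1) ^ j * i.choose j * catalan (i - 1) := by
  unfold W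
  split_ifs with h
  · rfl
  · rw [Nat.choose_eq_zero_of_lt (by omega)]
    simp

theorem coeff_catalanTerm {i e : ℕ} (hi : 1 ≤ i) (he : i ≤ e) :
    (catalanTerm i).coeff e = W i (e - i) := by
  rw [catalanTerm, coeff_C_mul, mul_pow, coeff_X_pow_mul', if_pos he, coeff_one_sub_X_pow,
    W_of_one_le hi]
  ring

theorem coeff_catalanForm {a e : ℕ} (he : a + 1 ≤ e) :
    (catalanForm a).coeff e = α a (e - a) := by
  rw [catalanForm, coeff_sub, coeff_add, finsetSum_coeff, coeff_C_mul,
    coeff_catalanTerm le_add_self he, coeff_X, α]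
  congr 2
  · refine sum_congr rfl fun i hi => ?_
    rw [mem_Icc] at hi
    rw [coeff_catalanTerm hi.1 (by omega), show a + (e - a) - i = e - i by omega]
  · exact propext (by omega)

theorem α_eq_zero_of_lt {a t : ℕ} (ht : a + 2 < t) : α a t = 0 := by
  have hW : ∀ i j, i < j → W i j = 0 := fun i j h => if_neg (by omega)
  rw [α, sum_eq_zero fun i hi => hW _ _ (by rw [mem_Icc] at hi; omega), hW _ _ (by omega),
    if_neg (by omega)]
  ring

theorem catalanForm_eq_sum_α (a : ℕ) :
    catalanForm a = ∑ t ∈ Icc 1 (a + 2), C (α a t) * X ^ (a + t) := by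
  ext e
  simp only [finsetSum_coeff, coeff_C_mul_X_pow]
  rcases le_or_gt e a with he | he
  · have hdvd : X ^ (a + 1) ∣ catalanForm a := by
      rw [catalanForm_eq]
      exact dvd_mul_of_dvd_right (X_pow_dvd_one_sub_bernsteinPartialSum ℝ (by omega)) _
    rw [X_pow_dvd_iff.mp hdvd e (by omega)]
    exact (sum_eq_zero fun t ht => if_neg (by rw [mem_Icc] at ht; omega)).symm
  · have hindex (t : ℕ) : e = a + t ↔ t = e - a := by omega
    rw [coeff_catalanForm he, sum_congr rfl fun t _ => if_congr (hindex t) rfl rfl, sum_ite_eq']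
    split_ifs with h
    · rfl
    · exact α_eq_zero_of_lt (by rw [mem_Icc] at h; omega)

theorem accuracy_expanded_polynomial_form (a : ℕ) (θ : ℝ) :
    acc (2 * a + 1) θ = 1 - θ - ∑ t ∈ Finset.Icc 1 (a + 2), α a t * θ ^ (a + t) := by
  have h := congrArg (eval θ) (catalanForm_eq_sum_α a)
  rw [catalanForm_eq] at h
  simp only [eval_finsetSum, eval_mul, eval_C, eval_pow, eval_X, eval_sub, eval_one,
    eval_ofNat] at h
  rw [acc_two_mul_add_one]
  linear_combination -h
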